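/- For every M ≥ 3, the family B_M of M-bounded triangular ladders is closed under taking prefixes: if π ∈ B_M and σ is a (nonempty) prefix of π, then σ ∈ B_M. -/

import Mathlib

/-!
Every condition defining `B_M` passes to prefixes. The conditions defining `Π` forbid letters
at fixed positions and certain factors. The ladder `L_σ` of a prefix `σ` of `π` is a subgraph
of `L_π`, so an `M`-fan of `L_σ` is an `M`-fan of `L_π`; the fan condition also reads the
letter at position `a - 2`, which is the same in `σ` and `π` because the fan's last spoke
already lies in `L_σ`, whose vertices are at most `|σ| + 1`. The length bounds are
inherited as well, except when `σ` has one `e` and `π` two; then `|σ| ≤ M + 1 < 2M` makes the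
condition on position `2M` vacuous.
-/

noncomputable section

namespace TriangleRemoval

/-- The alphabet `{e, 0, 1}` of triangular-ladder words. -/
inductive Sym : Type
  | e : Sym
  | zero : Sym
  | one : Sym
deriving DecidableEq

/-- `nth π j` is the `j`-th symbol of `π` (1-based), if it exists. -/
def nth (π : List Sym) (j : ℕ) : Option Sym :=
  if j = 0 then none else π[j - 1]?

/-- One construction step of a triangular ladder. The state is
`(k, o, E)`: the last vertex `k`, the backward neighbor `o` of `k` other than `k - 1`
(junk if the last symbol was `e`), and the current edge set `E`. -/
def ladderStep : ℕ × ℕ × Set (Sym2 ℕ) → Sym → ℕ × ℕ × Set (Sym2 ℕ)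
  | (k, _, E), Sym.one => (k + 1, k - 1, insert s(k - 1, k + 1) (insert s(k, k + 1) E))
  | (k, o, E), Sym.zero => (k + 1, o, insert s(o, k + 1) (insert s(k, k + 1) E))
  | (k, _, E), Sym.e => (k + 1, 0, insert s(k, k + 1) E)

/-- The initial state of the construction, according to the first symbol:
`L_1` has edges `{02, 12}`, `L_e` has the single edge `12`. -/
def ladderInit : Sym → ℕ × ℕ × Set (Sym2 ℕ)
  | Sym.one => (2, 0, {s(0, 2), s(1, 2)})
  | _ => (2, 0, {s(1, 2)})

/-- The data of the triangular ladder built from the word `π`. -/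
def ladderData : List Sym → ℕ × ℕ × Set (Sym2 ℕ)
  | [] => (1, 0, ∅)
  | a :: rest => rest.foldl ladderStep (ladderInit a)

/-- The triangular ladder `L_π`, a graph on `{0, 1, …, |π|+1} ⊆ ℕ`. -/
def ladder (π : List Sym) : SimpleGraph ℕ :=
  SimpleGraph.fromEdgeSet (ladderData π).2.2

/-- `L_π` has an `f`-fan at the vertex `a > 0`. -/
def hasFanAt (π : List Sym) (f a : ℕ) : Prop :=
  0 < a ∧
    ((nth π (a - 2) ≠ some Sym.e ∧
        ∀ b ∈ Finset.Icc (a + 1) (a + f + 1), (ladder π).Adj a b) ∨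
     (nth π (a - 2) = some Sym.e ∧ (ladder π).Adj a (a - 1) ∧
        ∀ b ∈ Finset.Icc (a + 1) (a + f), (ladder π).Adj a b))

/-- `L_π` contains an `f`-fan. -/
def hasFan (π : List Sym) (f : ℕ) : Prop := ∃ a, hasFanAt π f a

/-- Membership in `Π`: no `0` in positions 1 or 2, at most two occurrences of `e`, and
no substrings `e0`, `e10`, `e1e`. -/
def memPi (π : List Sym) : Prop :=
  nth π 1 ≠ some Sym.zero ∧ nth π 2 ≠ some Sym.zero ∧ π.count Sym.e ≤ 2 ∧
    ¬ [Sym.e, Sym.zero] <:+: π ∧ ¬ [Sym.e, Sym.one, Sym.zero] <:+: π ∧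
    ¬ [Sym.e, Sym.one, Sym.e] <:+: π

/-- Membership in `B_M`: `π ∈ Π` is nonempty, contains no `M`-fan, and satisfies the
length restrictions according to the number of occurrences of `e`. -/
def memB (M : ℕ) (π : List Sym) : Prop :=
  memPi π ∧ π ≠ [] ∧ ¬ hasFan π M ∧
    ((π.count Sym.e = 0 ∧ π.length ≤ 3 * M - 1) ∨
     (π.count Sym.e = 1 ∧ π.length ≤ 2 * M ∧ nth π (2 * M) ≠ some Sym.e) ∨
     (π.count Sym.e = 2 ∧ π.length ≤ M + 1 ∧ nth π (M + 1) ≠ some Sym.e))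

/-- `π' = π_{z-1} ∘ 0` if `y < z-1` and `π' = π_{z-1} ∘ 1` if `y = z-1`. -/
def boundaryWord (π : List Sym) (y z : ℕ) : List Sym :=
  π.take (z - 1) ++ [if y < z - 1 then Sym.zero else Sym.one]

/-- `yz` is a boundary edge of `L_π` with respect to `B_M`. -/
def IsBoundaryEdge (M : ℕ) (π : List Sym) (y z : ℕ) : Prop :=
  0 < y ∧ y < z ∧ (ladder π).Adj y z ∧ nth π y ≠ some Sym.e ∧
    ¬ memB M (boundaryWord π y z)

/-- `yz` is an outer boundary edge of `L_π` with respect to `B_M`. -/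
def IsOuterBoundaryEdge (M : ℕ) (π : List Sym) (y z : ℕ) : Prop :=
  IsBoundaryEdge M π y z ∧ z = π.length + 1 ∧
    ((π.count Sym.e = 0 ∧ π.length = 3 * M - 1) ∨
     (π.count Sym.e = 1 ∧ π.length = 2 * M) ∨
     (π.count Sym.e = 2 ∧ π.length = M + 1))

/-- `yz` is a side boundary edge of `L_π` with respect to `B_M`. -/
def IsSideBoundaryEdge (M : ℕ) (π : List Sym) (y z : ℕ) : Prop :=
  IsBoundaryEdge M π y z ∧ ¬ IsOuterBoundaryEdge M π y z

section Prefix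

variable {σ π : List Sym}

lemma nth_eq_of_prefix (h : σ <+: π) {j : ℕ} (hj : j ≤ σ.length) : nth σ j = nth π j := by
  obtain ⟨t, rfl⟩ := h
  unfold nth
  split_ifs
  · rfl
  · exact (List.getElem?_append_left (by omega)).symm

lemma le_length_of_nth_eq_some {j : ℕ} {x : Sym} (h : nth σ j = some x) : j ≤ σ.length := by
  unfold nth at h
  split_ifs at h
  exact Nat.le_of_pred_lt (List.getElem?_eq_some_iff.1 h).1

lemma nth_eq_none_of_length_lt {j : ℕ} (h : σ.length < j) : nth σ j = none := by
  simp [nth, List.getElem?_eq_none (Nat.le_sub_one_of_lt h)]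

lemma nth_eq_some_of_prefix (h : σ <+: π) {j : ℕ} {x : Sym} (hx : nth σ j = some x) :
    nth π j = some x :=
  nth_eq_of_prefix h (le_length_of_nth_eq_some hx) ▸ hx

lemma edgeSet_subset_foldl_ladderStep (l : List Sym) (st : ℕ × ℕ × Set (Sym2 ℕ)) :
    st.2.2 ⊆ (l.foldl ladderStep st).2.2 := by
  induction l generalizing st with
  | nil => exact subset_rfl
  | cons x xs ih =>
    refine subset_trans ?_ (ih (ladderStep st x))
    obtain ⟨k, o, E⟩ := st
    cases x <;> simp only [ladderStep] <;> intro y hy <;> simp [hy]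

lemma ladder_mono (h : σ <+: π) : ladder σ ≤ ladder π := by
  obtain ⟨t, rfl⟩ := h
  suffices (ladderData σ).2.2 ⊆ (ladderData (σ ++ t)).2.2 from
    fun x y hxy => ⟨this hxy.1, hxy.2⟩
  cases σ with
  | nil => simp [ladderData]
  | cons a s =>
    simp only [ladderData, List.cons_append, List.foldl_append]
    exact edgeSet_subset_foldl_ladderStep t _

def BoundedState (st : ℕ × ℕ × Set (Sym2 ℕ)) : Prop :=
  st.2.1 ≤ st.1 ∧ ∀ e ∈ st.2.2, ∀ x ∈ e, x ≤ st.1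

lemma boundedState_ladderStep {st : ℕ × ℕ × Set (Sym2 ℕ)} (h : BoundedState st) (x : Sym) :
    BoundedState (ladderStep st x) := by
  obtain ⟨k, o, E⟩ := st
  obtain ⟨ho, hE⟩ : o ≤ k ∧ ∀ e ∈ E, ∀ x ∈ e, x ≤ k := h
  have hE' : ∀ e ∈ E, ∀ x ∈ e, x ≤ k + 1 :=
    fun e he x hx => (hE e he x hx).trans k.le_succ
  cases x <;> simp only [BoundedState, ladderStep, Set.mem_insert_iff, forall_eq_or_imp,
    Sym2.mem_iff, forall_eq] <;> constructorm* _ ∧ _ <;> first | exact hE' | omega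

lemma foldl_ladderStep_fst (l : List Sym) (st : ℕ × ℕ × Set (Sym2 ℕ)) :
    (l.foldl ladderStep st).1 = st.1 + l.length := by
  induction l generalizing st with
  | nil => rfl
  | cons x xs ih =>
    obtain ⟨k, o, E⟩ := st
    cases x <;> simp only [List.foldl_cons, ih, ladderStep, List.length_cons] <;> omega

lemma boundedState_foldl_ladderStep {st : ℕ × ℕ × Set (Sym2 ℕ)} (h : BoundedState st)
    (l : List Sym) : BoundedState (l.foldl ladderStep st) := by
  induction l generalizing st with
  | nil => exact h
  | cons x xs ih => exact ih (boundedState_ladderStep h x)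

lemma boundedState_ladderInit (a : Sym) : BoundedState (ladderInit a) := by
  cases a <;> simp [BoundedState, ladderInit, Sym2.mem_iff]

lemma le_length_add_one_of_ladder_adj {x y : ℕ} (h : (ladder σ).Adj x y) :
    y ≤ σ.length + 1 := by
  cases σ with
  | nil => simp [ladder, ladderData] at h
  | cons a s =>
    have hinit : (ladderInit a).1 = 2 := by cases a <;> rfl
    have hfst := foldl_ladderStep_fst s (ladderInit a)
    have hy := (boundedState_foldl_ladderStep (boundedState_ladderInit a) s).2 _ h.1 y
      (Sym2.mem_mk_right x y)
    rw [List.length_cons]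
    omega

lemma hasFanAt_of_prefix (h : σ <+: π) {f a : ℕ} (hfan : hasFanAt σ f a) : hasFanAt π f a := by
  obtain ⟨ha, ⟨hnth, hadj⟩ | ⟨hnth, hadj₁, hadj⟩⟩ := hfan
  · have hlen : a + f + 1 ≤ σ.length + 1 := le_length_add_one_of_ladder_adj (hadj _ (by simp))
    exact ⟨ha, .inl ⟨nth_eq_of_prefix h (j := a - 2) (by omega) ▸ hnth,
      fun b hb => ladder_mono h (hadj b hb)⟩⟩
  · exact ⟨ha, .inr ⟨nth_eq_some_of_prefix h hnth, ladder_mono h hadj₁,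
      fun b hb => ladder_mono h (hadj b hb)⟩⟩

lemma hasFan_of_prefix (h : σ <+: π) {f : ℕ} (hfan : hasFan σ f) : hasFan π f :=
  hfan.imp fun _ => hasFanAt_of_prefix h

lemma memPi_of_prefix (h : σ <+: π) (hπ : memPi π) : memPi σ := by
  obtain ⟨h₁, h₂, hcount, he0, he10, he1e⟩ := hπ
  exact ⟨fun hσ => h₁ (nth_eq_some_of_prefix h hσ), fun hσ => h₂ (nth_eq_some_of_prefix h hσ),
    (h.count_le _).trans hcount, fun hσ => he0 (hσ.trans h.isInfix),
    fun hσ => he10 (hσ.trans h.isInfix), fun hσ => he1e (hσ.trans h.isInfix)⟩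

def LengthBounded (M : ℕ) (π : List Sym) : Prop :=
  (π.count Sym.e = 0 ∧ π.length ≤ 3 * M - 1) ∨
    (π.count Sym.e = 1 ∧ π.length ≤ 2 * M ∧ nth π (2 * M) ≠ some Sym.e) ∨
    (π.count Sym.e = 2 ∧ π.length ≤ M + 1 ∧ nth π (M + 1) ≠ some Sym.e)

lemma lengthBounded_of_prefix {M : ℕ} (hM : 2 ≤ M) (h : σ <+: π) (hπ : LengthBounded M π) :
    LengthBounded M σ := by
  have hcount := h.count_le Sym.e
  have hlen := h.length_le
  have hnth : ∀ j, nth π j ≠ some Sym.e → nth σ j ≠ some Sym.e :=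
    fun j hπj hσj => hπj (nth_eq_some_of_prefix h hσj)
  rcases hπ with ⟨hc, hl⟩ | ⟨hc, hl, hn⟩ | ⟨hc, hl, hn⟩
  · exact .inl ⟨by omega, by omega⟩
  · obtain hσc | hσc : σ.count Sym.e = 0 ∨ σ.count Sym.e = 1 := by omega
    · exact .inl ⟨hσc, by omega⟩
    · exact .inr (.inl ⟨hσc, by omega, hnth _ hn⟩)
  · obtain hσc | hσc | hσc :
        σ.count Sym.e = 0 ∨ σ.count Sym.e = 1 ∨ σ.count Sym.e = 2 := by omega
    · exact .inl ⟨hσc, by omega⟩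
    · have hσlen : σ.length < 2 * M := by omega
      exact .inr (.inl ⟨hσc, by omega, by simp [nth_eq_none_of_length_lt hσlen]⟩)
    · exact .inr (.inr ⟨hσc, by omega, hnth _ hn⟩)

end Prefix

/-- For every `M ≥ 3`, the family `B_M` of `M`-bounded triangular
ladders is closed under taking (nonempty) prefixes. -/
theorem memB_of_prefix (M : ℕ) (hM : 3 ≤ M) (π σ : List Sym)
    (hπ : memB M π) (hpre : σ <+: π) (hne : σ ≠ []) : memB M σ := by
  obtain ⟨hπPi, -, hπfan, hπlen⟩ := hπ
  exact ⟨memPi_of_prefix hpre hπPi, hne, fun hσfan => hπfan (hasFan_of_prefix hpre hσfan),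
    lengthBounded_of_prefix (by omega) hpre hπlen⟩

end TriangleRemoval
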